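/- arXiv:2409.09189 — 2 statements merged into one kernel-verified Lean document; each statement's English description precedes it below -/
import Mathlib

section
/- Let G be a finite group and let ρ be a finite-dimensional complex representation of G with character χ (so χ(g) is the trace of ρ(g)). If χ(g) is a rational number for every g ∈ G, then for every g ∈ G and every integer i coprime to the order of g, one has χ(g^i) = χ(g). In particular, rational-valued characters are constant on divisions. -/
/-!
If `n` is the order of `g`, then `ρ g ^ n = 1`, so `ρ g` is diagonalizable with eigenvalues
`ζ ^ aₖ` for a primitive `n`-th root of unity `ζ`, and `χ (g ^ j) = P (ζ ^ j)` for
`P = ∑ₖ X ^ aₖ`. If `χ g = q ∈ ℚ`, then `P - q` vanishes at `ζ`, so it is divisible by the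
minimal polynomial of `ζ` over `ℚ`, the cyclotomic polynomial `Φₙ`. For `j` coprime to `n`,
`ζ ^ j` is another root of `Φₙ`, hence `χ (g ^ j) = P (ζ ^ j) = q`.
-/

open Module Polynomial

theorem IsOfFinOrder.exists_coprime_pow_eq_zpow {G : Type*} [Group G] {g : G}
    (hg : IsOfFinOrder g) {i : ℤ} (hi : i.gcd (orderOf g) = 1) :
    ∃ j : ℕ, j.Coprime (orderOf g) ∧ g ^ i = g ^ j := by
  have hmod : 0 ≤ i % (orderOf g : ℤ) := Int.emod_nonneg i (by exact_mod_cast hg.orderOf_pos.ne')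
  refine ⟨(i % orderOf g).toNat, ?_, ?_⟩
  · rw [Nat.coprime_iff_gcd_eq_one, ← Int.gcd_natCast_natCast, Int.toNat_of_nonneg hmod,
      Int.gcd_emod, hi]
  · rw [← zpow_natCast, Int.toNat_of_nonneg hmod, zpow_mod_orderOf]

theorem IsPrimitiveRoot.sum_mul_pow_eq_of_coprime {ι K : Type*} [Fintype ι] [Field K]
    [CharZero K] {ζ : K} {n : ℕ} (hζ : IsPrimitiveRoot ζ n) (hn : 0 < n) (c : ι → ℚ) {μ : ι → K}
    (hμ : ∀ i, μ i ^ n = 1) {q : ℚ} (hq : ∑ i, (c i : K) * μ i = q) {j : ℕ} (hj : j.Coprime n) :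
    ∑ i, (c i : K) * μ i ^ j = q := by
  have : NeZero n := ⟨hn.ne'⟩
  choose a ha using fun i => hζ.eq_pow_of_pow_eq_one (hμ i)
  set P : ℚ[X] := ∑ i, C (c i) * X ^ a i - C q
  have hP : ∀ m : ℕ, aeval (ζ ^ m) P = ∑ i, (c i : K) * μ i ^ m - q := by
    intro m
    simp [P, ← (ha _).2, ← pow_mul, mul_comm m]
  have hminpoly : minpoly ℚ (ζ ^ j) = minpoly ℚ ζ := by
    rw [← cyclotomic_eq_minpoly_rat (hζ.pow_of_coprime j hj) hn, cyclotomic_eq_minpoly_rat hζ hn]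
  have hPζ : aeval ζ P = 0 := by simpa [hq] using hP 1
  have hPζj : aeval (ζ ^ j) P = 0 := minpoly.dvd_iff.mp (hminpoly ▸ minpoly.dvd_iff.mpr hPζ)
  rwa [hP, sub_eq_zero] at hPζj

namespace Module.End

variable {K V : Type*} [Field K] [AddCommGroup V] [Module K V]

theorem pow_apply_of_mem_eigenspace {f : End K V} {μ : K} {x : V} (hx : x ∈ f.eigenspace μ)
    (k : ℕ) : (f ^ k) x = μ ^ k • x := by
  obtain rfl | hx0 := eq_or_ne x 0
  · simp
  · exact HasEigenvector.pow_apply ⟨hx, hx0⟩ k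

theorem isSemisimple_of_pow_eq_one {f : End K V} {n : ℕ} [NeZero (n : K)] (hf : f ^ n = 1) :
    f.IsSemisimple :=
  isSemisimple_of_squarefree_aeval_eq_zero
    ((X_pow_sub_one_separable_iff (n := n)).mpr (NeZero.ne _)).squarefree (by simp [hf])

theorem HasEigenvalue.pow_eq_one {f : End K V} {μ : K} {n : ℕ} (hμ : f.HasEigenvalue μ)
    (hf : f ^ n = 1) : μ ^ n = 1 := by
  obtain ⟨v, hv⟩ := (hμ.pow n).exists_hasEigenvector
  have hv₁ := hv.apply_eq_smul
  rw [hf, one_apply] at hv₁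
  exact smul_left_injective K hv.2 (hv₁.symm.trans (one_smul K v).symm)

theorem IsSemisimple.trace_pow_eq_sum_eigenvalues [FiniteDimensional K V] [IsAlgClosed K]
    {f : End K V} (hf : f.IsSemisimple) (k : ℕ) :
    LinearMap.trace K V (f ^ k) =
      ∑ μ : f.Eigenvalues, (finrank K (f.eigenspace μ) : K) * (μ : K) ^ k := by
  classical
  have hint : DirectSum.IsInternal fun μ : f.Eigenvalues => f.eigenspace μ :=
    DirectSum.isInternal_ne_bot_iff.mpr <|
      DirectSum.isInternal_submodule_of_iSupIndep_of_iSup_eq_top f.eigenspaces_iSupIndep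
        hf.iSup_eigenspace_eq_top
  have hmaps : ∀ μ : f.Eigenvalues, Set.MapsTo (f ^ k) (f.eigenspace μ) (f.eigenspace μ) :=
    fun μ x hx => by
      rw [SetLike.mem_coe, pow_apply_of_mem_eigenspace hx]
      exact Submodule.smul_mem _ _ hx
  rw [LinearMap.trace_eq_sum_trace_restrict hint hmaps]
  refine Finset.sum_congr rfl fun μ _ => ?_
  have hrestrict : (f ^ k).restrict (hmaps μ) = (μ : K) ^ k • LinearMap.id := by
    ext ⟨x, hx⟩
    exact pow_apply_of_mem_eigenspace hx k
  rw [hrestrict, map_smul, LinearMap.trace_id, smul_eq_mul, mul_comm]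

end Module.End

/-- A rational-valued character of a finite-dimensional complex representation
of a finite group is constant on divisions: χ(g^i) = χ(g) whenever
gcd(i, ord g) = 1. -/
theorem stmt_1 {G : Type*} [Group G] [Finite G]
    {V : Type*} [AddCommGroup V] [Module ℂ V] [FiniteDimensional ℂ V]
    (ρ : Representation ℂ G V)
    (hrat : ∀ g : G, ∃ q : ℚ, LinearMap.trace ℂ V (ρ g) = (q : ℂ)) :
    ∀ (g : G) (i : ℤ), Int.gcd i (orderOf g) = 1 →
      LinearMap.trace ℂ V (ρ (g ^ i)) = LinearMap.trace ℂ V (ρ g) := by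
  intro g i hi
  obtain ⟨j, hj, hgj⟩ := (isOfFinOrder_of_finite g).exists_coprime_pow_eq_zpow hi
  obtain ⟨q, hq⟩ := hrat g
  set A : Module.End ℂ V := ρ g
  have hn : 0 < orderOf g := orderOf_pos g
  have : NeZero (orderOf g : ℂ) := ⟨Nat.cast_ne_zero.mpr hn.ne'⟩
  have hAn : A ^ orderOf g = 1 := by rw [← map_pow, pow_orderOf_eq_one, map_one]
  have htrace := (End.isSemisimple_of_pow_eq_one hAn).trace_pow_eq_sum_eigenvalues
  have hq₁ := htrace 1
  simp only [pow_one, hq] at hq₁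
  calc LinearMap.trace ℂ V (ρ (g ^ i)) = LinearMap.trace ℂ V (A ^ j) := by rw [hgj, map_pow]
    _ = q := by
      rw [htrace]
      exact_mod_cast (Complex.isPrimitiveRoot_exp _ hn.ne').sum_mul_pow_eq_of_coprime hn
        (fun μ : A.Eigenvalues => (finrank ℂ (A.eigenspace μ) : ℚ)) (μ := fun μ => (μ : ℂ))
        (fun μ => End.HasEigenvalue.pow_eq_one μ.2 hAn) (mod_cast hq₁.symm) hj
    _ = LinearMap.trace ℂ V A := hq.symm
end

section
/- Let G be a finite group and let H₁, H₂ be subgroups of G. Then H₁ and H₂ are Gassmann equivalent (i.e., |cl(g) ∩ H₁| = |cl(g) ∩ H₂| for every g ∈ G) if and only if for every g ∈ G the number of left cosets of G/H₁ fixed by left multiplication by g equals the number of left cosets of G/H₂ fixed by left multiplication by g. In particular, Gassmann equivalent subgroups have the same index in G. -/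
private lemma fix_iff {G : Type*} [Group G] (H : Subgroup G) (g x : G) :
    g • (x : G ⧸ H) = x ↔ x⁻¹ * g * x ∈ H := by
  have h1 : g • (x : G ⧸ H) = ((g * x : G) : G ⧸ H) := rfl
  rw [h1, QuotientGroup.eq, ← H.inv_mem_iff, show ((g * x)⁻¹ * x)⁻¹ = x⁻¹ * g * x by group]

private noncomputable def equivA {G : Type*} [Group G] (H : Subgroup G) (g : G) :
    {x : G // x⁻¹ * g * x ∈ H} ≃ {q : G ⧸ H // g • q = q} × H where
  toFun x := (⟨(x.1 : G ⧸ H), (fix_iff H g x.1).2 x.2⟩,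
    ⟨((x.1 : G ⧸ H)).out⁻¹ * x.1, QuotientGroup.eq.mp (QuotientGroup.out_eq' _)⟩)
  invFun p := ⟨p.1.1.out * p.2.1, by
    have h1 : (p.1.1.out)⁻¹ * g * p.1.1.out ∈ H := by
      have h2 := p.1.2
      rw [← QuotientGroup.out_eq' p.1.1, fix_iff] at h2
      exact h2
    have h3 := H.mul_mem (H.mul_mem (H.inv_mem p.2.2) h1) p.2.2
    convert h3 using 1
    group⟩
  left_inv x := by
    ext
    simp [mul_inv_cancel_left]
  right_inv p := by
    have hmk : ((p.1.1.out * p.2.1 : G) : G ⧸ H) = p.1.1 := by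
      rw [QuotientGroup.mk_mul_of_mem _ p.2.2, QuotientGroup.out_eq']
    refine Prod.ext (Subtype.ext hmk) (Subtype.ext ?_)
    show ((p.1.1.out * p.2.1 : G) : G ⧸ H).out⁻¹ * (p.1.1.out * p.2.1) = p.2.1
    rw [hmk, inv_mul_cancel_left]

open Classical in
private noncomputable def sec {G : Type*} [Group G] (g y : G) : G :=
  if h : IsConj g y then (Classical.choose (isConj_iff.mp h))⁻¹ else 1

open Classical in
private lemma sec_spec {G : Type*} [Group G] {g y : G} (h : IsConj g y) :
    (sec g y)⁻¹ * g * sec g y = y := by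
  rw [sec, dif_pos h, inv_inv]
  exact Classical.choose_spec (isConj_iff.mp h)

private noncomputable def equivB {G : Type*} [Group G] (H : Subgroup G) (g : G) :
    {x : G // x⁻¹ * g * x ∈ H} ≃
      {y : G // IsConj g y ∧ y ∈ H} × (Subgroup.centralizer ({g} : Set G)) where
  toFun x := (⟨x.1⁻¹ * g * x.1, ⟨isConj_iff.mpr ⟨x.1⁻¹, by group⟩, x.2⟩⟩,
    ⟨sec g (x.1⁻¹ * g * x.1) * x.1⁻¹, by
      rw [Subgroup.mem_centralizer_iff]
      intro h hh
      rw [Set.mem_singleton_iff] at hh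
      rw [hh]
      have key := sec_spec (isConj_iff.mpr ⟨x.1⁻¹, by group⟩ :
        IsConj g (x.1⁻¹ * g * x.1))
      set s := sec g (x.1⁻¹ * g * x.1) with hs
      have h2 : g * s = s * (x.1⁻¹ * g * x.1) := by
        conv_lhs => rw [show g = s * (s⁻¹ * g * s) * s⁻¹ by group, key]
        group
      rw [← mul_assoc, h2]
      group⟩)
  invFun p := ⟨p.2.1⁻¹ * sec g p.1.1, by
    have hcg : g * p.2.1 = p.2.1 * g :=
      Subgroup.mem_centralizer_iff.mp p.2.2 g (Set.mem_singleton g)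
    have key := sec_spec p.1.2.1
    have e : (p.2.1⁻¹ * sec g p.1.1)⁻¹ * g * (p.2.1⁻¹ * sec g p.1.1)
        = (sec g p.1.1)⁻¹ * (p.2.1 * g * p.2.1⁻¹) * sec g p.1.1 := by group
    rw [e, show p.2.1 * g * p.2.1⁻¹ = g by rw [← hcg]; group, key]
    exact p.1.2.2⟩
  left_inv x := by
    ext
    show (sec g (x.1⁻¹ * g * x.1) * x.1⁻¹)⁻¹ * sec g (x.1⁻¹ * g * x.1) = x.1
    group
  right_inv p := by
    obtain ⟨⟨y, hy⟩, ⟨c, hc⟩⟩ := p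
    have hcg : g * c = c * g := Subgroup.mem_centralizer_iff.mp hc g (Set.mem_singleton g)
    have key := sec_spec hy.1
    have hx : (c⁻¹ * sec g y)⁻¹ * g * (c⁻¹ * sec g y) = y := by
      have e : (c⁻¹ * sec g y)⁻¹ * g * (c⁻¹ * sec g y)
          = (sec g y)⁻¹ * (c * g * c⁻¹) * sec g y := by group
      rw [e, show c * g * c⁻¹ = g by rw [← hcg]; group, key]
    refine Prod.ext (Subtype.ext hx) (Subtype.ext ?_)
    show sec g ((c⁻¹ * sec g y)⁻¹ * g * (c⁻¹ * sec g y)) * (c⁻¹ * sec g y)⁻¹ = c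
    rw [hx]
    group

private lemma keyAB {G : Type*} [Group G] [Finite G] (H : Subgroup G) (g : G) :
    Nat.card {q : G ⧸ H // g • q = q} * Nat.card H
      = Nat.card {y : G // IsConj g y ∧ y ∈ H}
        * Nat.card (Subgroup.centralizer ({g} : Set G)) := by
  calc Nat.card {q : G ⧸ H // g • q = q} * Nat.card H
      = Nat.card ({q : G ⧸ H // g • q = q} × H) := (Nat.card_prod _ _).symm
    _ = Nat.card {x : G // x⁻¹ * g * x ∈ H} := (Nat.card_congr (equivA H g)).symm
    _ = Nat.card ({y : G // IsConj g y ∧ y ∈ H} × (Subgroup.centralizer ({g} : Set G))) :=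
        Nat.card_congr (equivB H g)
    _ = _ := Nat.card_prod _ _

private lemma natCard_sigma {ι : Type*} [Fintype ι] (f : ι → Type*) [∀ i, Finite (f i)] :
    Nat.card (Σ i, f i) = ∑ i, Nat.card (f i) := by
  classical
  letI : ∀ i, Fintype (f i) := fun i => Fintype.ofFinite (f i)
  simp [Nat.card_eq_fintype_card, Fintype.card_sigma]

private lemma card_sub_eq {G : Type*} [Group G] [Finite G] {H₁ H₂ : Subgroup G}
    (h : ∀ g : G, Nat.card {y : G // IsConj g y ∧ y ∈ H₁}
        = Nat.card {y : G // IsConj g y ∧ y ∈ H₂}) :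
    Nat.card H₁ = Nat.card H₂ := by
  classical
  letI : Fintype (ConjClasses G) := Fintype.ofFinite _
  have key : ∀ H : Subgroup G, Nat.card H
      = ∑ c : ConjClasses G, Nat.card {y : G // IsConj (Quotient.out c) y ∧ y ∈ H} := by
    intro H
    have e1 : (H : Type _) ≃ Σ c : ConjClasses G,
        {y : {y : G // y ∈ H} // ConjClasses.mk y.1 = c} :=
      (Equiv.sigmaFiberEquiv fun y : {y : G // y ∈ H} => ConjClasses.mk y.1).symm
    have e2 : ∀ c : ConjClasses G,
        {y : {y : G // y ∈ H} // ConjClasses.mk y.1 = c}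
          ≃ {y : G // IsConj (Quotient.out c) y ∧ y ∈ H} := by
      intro c
      have hmk : ∀ y : G, ConjClasses.mk y = c ↔ IsConj (Quotient.out c) y := by
        intro y
        conv_lhs => rw [← Quotient.out_eq c]
        exact ⟨fun hh => (ConjClasses.mk_eq_mk_iff_isConj.mp hh).symm,
          fun hh => ConjClasses.mk_eq_mk_iff_isConj.mpr hh.symm⟩
      exact {
        toFun := fun y => ⟨y.1.1, ⟨(hmk y.1.1).mp y.2, y.1.2⟩⟩
        invFun := fun y => ⟨⟨y.1, y.2.2⟩, (hmk y.1).mpr y.2.1⟩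
        left_inv := fun y => by ext; rfl
        right_inv := fun y => by ext; rfl }
    rw [Nat.card_congr e1, natCard_sigma]
    exact Finset.sum_congr rfl fun c _ => Nat.card_congr (e2 c)
  rw [key H₁, key H₂]
  exact Finset.sum_congr rfl fun c _ => h (Quotient.out c)

/-- Subgroups H₁, H₂ of a finite group G are Gassmann equivalent
(|cl(g) ∩ H₁| = |cl(g) ∩ H₂| for all g) iff for all g the number of left
cosets of G/H₁ fixed by g equals that of G/H₂; moreover Gassmann equivalent
subgroups have the same index. -/
theorem stmt_4 {G : Type*} [Group G] [Finite G] (H₁ H₂ : Subgroup G) :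
    ((∀ g : G, Nat.card {y : G // IsConj g y ∧ y ∈ H₁}
        = Nat.card {y : G // IsConj g y ∧ y ∈ H₂}) ↔
      (∀ g : G, Nat.card {x : G ⧸ H₁ // g • x = x}
        = Nat.card {x : G ⧸ H₂ // g • x = x})) ∧
    ((∀ g : G, Nat.card {y : G // IsConj g y ∧ y ∈ H₁}
        = Nat.card {y : G // IsConj g y ∧ y ∈ H₂}) →
      H₁.index = H₂.index) := by
  have hH₁pos : 0 < Nat.card H₁ := Nat.card_pos
  have hfwd : (∀ g : G, Nat.card {y : G // IsConj g y ∧ y ∈ H₁}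
      = Nat.card {y : G // IsConj g y ∧ y ∈ H₂}) →
      (∀ g : G, Nat.card {x : G ⧸ H₁ // g • x = x}
        = Nat.card {x : G ⧸ H₂ // g • x = x}) := by
    intro h g
    have hcard := card_sub_eq h
    have k1 := keyAB H₁ g
    have k2 := keyAB H₂ g
    rw [hcard] at k1
    rw [← h g] at k2
    exact Nat.eq_of_mul_eq_mul_right (hcard ▸ hH₁pos) (k1.trans k2.symm)
  have hidx : (∀ g : G, Nat.card {x : G ⧸ H₁ // g • x = x}
      = Nat.card {x : G ⧸ H₂ // g • x = x}) → H₁.index = H₂.index := by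
    intro h
    have e : ∀ H : Subgroup G, Nat.card {x : G ⧸ H // (1 : G) • x = x} = H.index := by
      intro H
      exact Nat.card_congr (Equiv.subtypeUnivEquiv fun x => one_smul G x)
    rw [← e H₁, ← e H₂]
    exact h 1
  refine ⟨⟨hfwd, ?_⟩, fun h => hidx (hfwd h)⟩
  intro h g
  have hidx' := hidx h
  have hcard : Nat.card H₁ = Nat.card H₂ := by
    have h1 := Subgroup.card_mul_index H₁
    have h2 := Subgroup.card_mul_index H₂
    rw [hidx'] at h1
    exact Nat.eq_of_mul_eq_mul_right
      (Nat.pos_of_ne_zero (Subgroup.index_ne_zero_of_finite (H := H₂))) (h1.trans h2.symm)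
  have k1 := keyAB H₁ g
  have k2 := keyAB H₂ g
  rw [hcard, h g] at k1
  have hCpos : 0 < Nat.card (Subgroup.centralizer ({g} : Set G)) := Nat.card_pos
  exact Nat.eq_of_mul_eq_mul_right hCpos (k1.symm.trans k2)
end
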